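/- arXiv:2603.17270 — 7 statements merged into one kernel-verified Lean document; each statement's English description precedes it below -/
import Mathlib

section
/- In the instance with two agents and three chores where agent 1 has costs (1+ε, 1, 0) and agent 2 has costs (1+ε, 0, 1) for items (e1, e2, e3), with ε > 0, every allocation that is Pareto optimal with respect to additive costs fails to be envy-free up to any item (EFX). Hence EFX and PO allocations need not coexist for restricted additive chore instances. -/
open Finset

/-- The bundle of agent `i` under assignment `A` of the three items to the two agents. -/
def bundle (A : Fin 3 → Fin 2) (i : Fin 2) : Finset (Fin 3) :=
  Finset.univ.filter (fun e => A e = i)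

/-- Cost of a bundle under additive costs `c`. -/
def cost (c : Fin 2 → Fin 3 → ℝ) (i : Fin 2) (S : Finset (Fin 3)) : ℝ :=
  ∑ e ∈ S, c i e

/-- EFX for chores. -/
def EFX (c : Fin 2 → Fin 3 → ℝ) (A : Fin 3 → Fin 2) : Prop :=
  ∀ i j : Fin 2, bundle A i = ∅ ∨
    ∀ e ∈ bundle A i, cost c i ((bundle A i).erase e) ≤ cost c i (bundle A j)

/-- Pareto optimality. -/
def PO (c : Fin 2 → Fin 3 → ℝ) (A : Fin 3 → Fin 2) : Prop :=
  ¬ ∃ A' : Fin 3 → Fin 2,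
      (∀ i, cost c i (bundle A' i) ≤ cost c i (bundle A i)) ∧
      (∃ i, cost c i (bundle A' i) < cost c i (bundle A i))

/-- The hard instance: costs (1+ε, 1, 0) and (1+ε, 0, 1). -/
def cmat (ε : ℝ) : Fin 2 → Fin 3 → ℝ :=
  ![![1 + ε, 1, 0], ![1 + ε, 0, 1]]

lemma cost_eq (c : Fin 2 → Fin 3 → ℝ) (i j : Fin 2) (A : Fin 3 → Fin 2) :
    cost c i (bundle A j) =
      (if A 0 = j then c i 0 else 0) + (if A 1 = j then c i 1 else 0) +
        (if A 2 = j then c i 2 else 0) := by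
  simp [cost, bundle, Finset.sum_filter, Fin.sum_univ_three]

theorem stmt0 (ε : ℝ) (hε : 0 < ε) (A : Fin 3 → Fin 2) (hPO : PO (cmat ε) A) :
    ¬ EFX (cmat ε) A := by
  intro hEFX
  have two : ∀ a : Fin 2, a = 0 ∨ a = 1 := by decide
  rcases two (A 1) with h1 | h1
  · -- agent 0 holds e2 : not PO, move e2 to agent 1
    refine hPO ⟨Function.update A 1 1, ?_, 0, ?_⟩
    · intro i
      fin_cases i <;>
        · rw [cost_eq, cost_eq]
          simp [Function.update_apply, h1, cmat]
    · rw [cost_eq, cost_eq]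
      simp [Function.update_apply, h1, cmat]
  · rcases two (A 2) with h2 | h2
    · -- A 1 = 1, A 2 = 0
      rcases two (A 0) with h0 | h0
      · -- bundle 0 = {0,2}
        have hb0 : bundle A 0 = {0, 2} := by
          ext e; fin_cases e <;> simp [bundle, h0, h1, h2]
        have hb1 : bundle A 1 = {1} := by
          ext e; fin_cases e <;> simp [bundle, h0, h1, h2]
        rcases hEFX 0 1 with h | h
        · rw [hb0] at h; exact absurd h (by decide)
        · have := h 2 (by rw [hb0]; decide)
          rw [hb0, hb1] at this
          have he : ({0, 2} : Finset (Fin 3)).erase 2 = {0} := by decide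
          rw [he] at this
          simp [cost, cmat] at this
          linarith
      · -- bundle 1 = {0,1}
        have hb1 : bundle A 1 = {0, 1} := by
          ext e; fin_cases e <;> simp [bundle, h0, h1, h2]
        have hb0 : bundle A 0 = {2} := by
          ext e; fin_cases e <;> simp [bundle, h0, h1, h2]
        rcases hEFX 1 0 with h | h
        · rw [hb1] at h; exact absurd h (by decide)
        · have := h 1 (by rw [hb1]; decide)
          rw [hb0, hb1] at this
          have he : ({0, 1} : Finset (Fin 3)).erase 1 = {0} := by decide
          rw [he] at this
          simp [cost, cmat] at this
          linarith
    · -- agent 1 holds e3 : not PO, move e3 to agent 0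
      refine hPO ⟨Function.update A 2 0, ?_, 1, ?_⟩
      · intro i
        fin_cases i <;>
          · rw [cost_eq, cost_eq]
            simp [Function.update_apply, h2, cmat]
      · rw [cost_eq, cost_eq]
        simp [Function.update_apply, h2, cmat]
end

section
/- In the instance with two agents and three chores where agent 1 has costs (1+ε, 1, 0) and agent 2 has costs (1+ε, 0, 1), with ε > 0, every EFX allocation has social cost at least 2+ε, while the minimum social cost over all allocations is 1+ε. Consequently, no EFX allocation achieves a social-cost approximation ratio better than (2+ε)/(1+ε). -/
open Finset

/-- Social cost: sum of each agent's cost for her own bundle. -/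
def sc (c : Fin 2 → Fin 3 → ℝ) (A : Fin 3 → Fin 2) : ℝ :=
  ∑ i : Fin 2, cost c i (bundle A i)

lemma sc_eq (c : Fin 2 → Fin 3 → ℝ) (A : Fin 3 → Fin 2) :
    sc c A = c (A 0) 0 + c (A 1) 1 + c (A 2) 2 := by
  have : sc c A = ∑ e : Fin 3, c (A e) e := by
    unfold sc cost bundle
    simp only [Finset.sum_filter]
    rw [Finset.sum_comm]
    congr 1; ext e
    simp [Finset.sum_ite_eq]
  rw [this, Fin.sum_univ_three]

@[simp] lemma vecCons_const_fin2 (a : ℝ) (i : Fin 2) :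
    Matrix.vecCons a (fun _ : Fin 1 => a) i = a := by
  fin_cases i <;> rfl

lemma bundle_eq (A : Fin 3 → Fin 2) (i : Fin 2) :
    bundle A i = Finset.univ.filter (fun e => A e = i) := rfl

theorem stmt1 (ε : ℝ) (hε : 0 < ε) :
    (∀ A : Fin 3 → Fin 2, EFX (cmat ε) A → 2 + ε ≤ sc (cmat ε) A) ∧
    (∃ A : Fin 3 → Fin 2, sc (cmat ε) A = 1 + ε) ∧
    (∀ A : Fin 3 → Fin 2, 1 + ε ≤ sc (cmat ε) A) := by
  refine ⟨?_, ⟨![0, 1, 0], by rw [sc_eq]; norm_num [cmat]; rfl⟩, ?_⟩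
  · intro A hA
    rw [sc_eq]
    have h1 : A 1 = 0 ∨ A 1 = 1 := by omega
    have h2 : A 2 = 0 ∨ A 2 = 1 := by omega
    have h0 : A 0 = 0 ∨ A 0 = 1 := by omega
    rcases h1 with h1 | h1 <;> rcases h2 with h2 | h2
    · simp [cmat, h1, h2]; linarith
    · -- A1=0, A2=1 : agent gets own bad chore plus e0; violation
      exfalso
      rcases h0 with h0 | h0
      · -- X0 = {0,1}, X1 = {2}; agent 0, item 1: erase → {0}, cost 1+ε > cost0(X1)=0
        have hb0 : bundle A 0 = {0, 1} := by
          ext e; fin_cases e <;> simp [bundle, h0, h1, h2]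
        have hb1 : bundle A 1 = {2} := by
          ext e; fin_cases e <;> simp [bundle, h0, h1, h2]
        rcases hA 0 1 with h | h
        · rw [hb0] at h; simp at h
        · have := h 1 (by rw [hb0]; simp)
          rw [hb0, hb1] at this
          have he : ({0, 1} : Finset (Fin 3)).erase 1 = {0} := by decide
          rw [he] at this
          simp [cost, cmat] at this
          linarith
      · -- X1 = {0,2}, X0 = {1}; agent 1, item 2: erase → {0}, cost 1+ε > cost1(X0)=0
        have hb0 : bundle A 0 = {1} := by
          ext e; fin_cases e <;> simp [bundle, h0, h1, h2]
        have hb1 : bundle A 1 = {0, 2} := by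
          ext e; fin_cases e <;> simp [bundle, h0, h1, h2]
        rcases hA 1 0 with h | h
        · rw [hb1] at h; simp at h
        · have := h 2 (by rw [hb1]; simp)
          rw [hb0, hb1] at this
          have he : ({0, 2} : Finset (Fin 3)).erase 2 = {0} := by decide
          rw [he] at this
          simp [cost, cmat] at this
          linarith
    · -- A1=1, A2=0 : the cheap allocation, not EFX
      exfalso
      rcases h0 with h0 | h0
      · -- X0 = {0,2}, X1 = {1}; agent 0, item 2: erase → {0}, cost 1+ε > cost0({1})=1
        have hb0 : bundle A 0 = {0, 2} := by
          ext e; fin_cases e <;> simp [bundle, h0, h1, h2]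
        have hb1 : bundle A 1 = {1} := by
          ext e; fin_cases e <;> simp [bundle, h0, h1, h2]
        rcases hA 0 1 with h | h
        · rw [hb0] at h; simp at h
        · have := h 2 (by rw [hb0]; simp)
          rw [hb0, hb1] at this
          have he : ({0, 2} : Finset (Fin 3)).erase 2 = {0} := by decide
          rw [he] at this
          simp [cost, cmat] at this
          linarith
      · -- X1 = {0,1}, X0 = {2}; agent 1, item 1: erase → {0}, cost 1+ε > cost1({2})=1
        have hb0 : bundle A 0 = {2} := by
          ext e; fin_cases e <;> simp [bundle, h0, h1, h2]
        have hb1 : bundle A 1 = {0, 1} := by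
          ext e; fin_cases e <;> simp [bundle, h0, h1, h2]
        rcases hA 1 0 with h | h
        · rw [hb1] at h; simp at h
        · have := h 1 (by rw [hb1]; simp)
          rw [hb0, hb1] at this
          have he : ({0, 1} : Finset (Fin 3)).erase 1 = {0} := by decide
          rw [he] at this
          simp [cost, cmat] at this
          linarith
    · simp [cmat, h1, h2]; linarith
  · intro A
    rw [sc_eq]
    have h1 : A 1 = 0 ∨ A 1 = 1 := by omega
    have h2 : A 2 = 0 ∨ A 2 = 1 := by omega
    rcases h1 with h1 | h1 <;> rcases h2 with h2 | h2 <;>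
      simp [cmat, h1, h2] <;> linarith
end

section
/- Consider a reallocation step in which the minimum-cost item e of the bundle B_b with maximum ĉ-value is moved to the bundle B_l with minimum total cost, under the condition ĉ(B_b) > c(B_l). Then after the move, the cost of each of the two modified bundles is strictly less than the cost of B_b before the move; in particular, the maximum bundle cost max_j c(B_j) does not increase. -/
open Finset

theorem stmt3 {ι : Type*} [DecidableEq ι] (n : ℕ) (c : ι → ℝ) (hc : ∀ x, 0 ≤ c x)
    (B : Fin n → Finset ι) (hdisj : ∀ i j, i ≠ j → Disjoint (B i) (B j))
    (b l : Fin n) (hbl : b ≠ l)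
    (e : ι) (he : e ∈ B b) (hemin : ∀ e' ∈ B b, c e ≤ c e') (hpos : 0 < c e)
    -- `b` maximizes ĉ: for every bundle `B j` with minimum item `f`,
    -- the cost of `B j` minus its cheapest item is at most that of `B b`
    (hbmax : ∀ j, ∀ f ∈ B j, (∀ f' ∈ B j, c f ≤ c f') →
      ∑ x ∈ (B j).erase f, c x ≤ ∑ x ∈ (B b).erase e, c x)
    -- `l` minimizes the total cost
    (hlmin : ∀ j, ∑ x ∈ B l, c x ≤ ∑ x ∈ B j, c x)
    -- the reallocation condition ĉ(B_b) > c(B_l)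
    (hgap : ∑ x ∈ B l, c x < ∑ x ∈ (B b).erase e, c x)
    -- the partition after moving `e` from `B b` to `B l`
    (B' : Fin n → Finset ι)
    (hB' : B' = fun j => if j = b then (B b).erase e
                         else if j = l then insert e (B l) else B j) :
    (∑ x ∈ B' b, c x < ∑ x ∈ B b, c x) ∧
    (∑ x ∈ B' l, c x < ∑ x ∈ B b, c x) ∧
    (∀ j, ∃ k, ∑ x ∈ B' j, c x ≤ ∑ x ∈ B k, c x) := by
  have hel : e ∉ B l := fun h => Finset.disjoint_left.mp (hdisj b l hbl) he h
  have hsumb : ∑ x ∈ (B b).erase e, c x + c e = ∑ x ∈ B b, c x :=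
    Finset.sum_erase_add _ _ he
  have h1 : ∑ x ∈ (B b).erase e, c x < ∑ x ∈ B b, c x := by linarith
  have h2 : ∑ x ∈ insert e (B l), c x < ∑ x ∈ B b, c x := by
    rw [Finset.sum_insert hel]; linarith
  subst hB'
  refine ⟨by simp [h1], by simp [hbl.symm, h2], fun j => ?_⟩
  by_cases hjb : j = b
  · exact ⟨b, by simp [hjb, h1.le]⟩
  by_cases hjl : j = l
  · exact ⟨b, by simp [hjb, hjl, Ne.symm hbl, h2.le]⟩
  · exact ⟨j, by simp [hjb, hjl]⟩
end

section
/- Let X_1, ..., X_n be an allocation of chores with additive restricted costs, and suppose the agents split into sets N_0 ∪ N_1 (agents with c_i(X_i) = c(X_i ∩ M⁺)) and N_2 (agents each of whom weakly prefers their own bundle to every bundle X_j with j ∈ N_0, where X_j ⊆ M⁺ for j ∈ N_0). If |N_0| ≥ |N_2| and the bundles X_j for j ∈ N_0∪N_1 intersected with M⁺ are disjoint subsets of M⁺, then the total social cost Σ_i c_i(X_i) is at most 2·c(M⁺). -/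
open Finset

theorem stmt7 {ι : Type*} [DecidableEq ι] (n : ℕ) (M Mplus : Finset ι) (hMp : Mplus ⊆ M)
    (c : ι → ℝ) (hc : ∀ e, 0 ≤ c e)
    (ci : Fin n → ι → ℝ)
    -- restricted additive costs
    (hrestr : ∀ i, ∀ e ∈ M, ci i e = 0 ∨ ci i e = c e)
    -- on M⁺ every agent's cost equals the common cost
    (hplus : ∀ i, ∀ e ∈ Mplus, ci i e = c e)
    -- the allocation: pairwise disjoint bundles of items of M
    (X : Fin n → Finset ι) (hXM : ∀ i, X i ⊆ M)
    (hdisj : ∀ i j, i ≠ j → Disjoint (X i) (X j))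
    -- the three groups of agents partition N
    (N0 N1 N2 : Finset (Fin n))
    (hpart : N0 ∪ N1 ∪ N2 = Finset.univ)
    (h01 : Disjoint N0 N1) (h02 : Disjoint N0 N2) (h12 : Disjoint N1 N2)
    -- (a) agents in N0 ∪ N1 only pay for their items in M⁺
    (ha : ∀ i ∈ N0 ∪ N1, ∑ e ∈ X i, ci i e = ∑ e ∈ X i ∩ Mplus, c e)
    -- (b) bundles of agents in N0 contain only items of M⁺
    (hb : ∀ j ∈ N0, X j ⊆ Mplus)
    -- (c) each agent in N2 weakly prefers her bundle to every bundle of an N0-agent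
    (hc2 : ∀ i ∈ N2, ∀ j ∈ N0, ∑ e ∈ X i, ci i e ≤ ∑ e ∈ X j, ci i e)
    -- (d) |N0| ≥ |N2|
    (hcard : N2.card ≤ N0.card) :
    ∑ i : Fin n, ∑ e ∈ X i, ci i e ≤ 2 * ∑ e ∈ Mplus, c e := by
  classical
  set g : Fin n → ℝ := fun j => ∑ e ∈ X j ∩ Mplus, c e with hg
  have hgnn : ∀ j, 0 ≤ g j := fun j => Finset.sum_nonneg fun e _ => hc e
  -- key: sum of g over any set is ≤ total
  have hkey : ∀ S : Finset (Fin n), ∑ j ∈ S, g j ≤ ∑ e ∈ Mplus, c e := by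
    intro S
    have hdisjS : (S : Set (Fin n)).PairwiseDisjoint (fun j => X j ∩ Mplus) := by
      intro i _ j _ hij
      exact (hdisj i j hij).mono (Finset.inter_subset_left) (Finset.inter_subset_left)
    rw [hg]
    rw [← Finset.sum_biUnion hdisjS]
    apply Finset.sum_le_sum_of_subset_of_nonneg
    · intro e he
      rcases Finset.mem_biUnion.1 he with ⟨j, _, hj⟩
      exact (Finset.mem_inter.1 hj).2
    · intro e _ _; exact hc e
  -- split the sum
  have hsplit : ∑ i : Fin n, ∑ e ∈ X i, ci i e
      = ∑ i ∈ N0 ∪ N1, ∑ e ∈ X i, ci i e + ∑ i ∈ N2, ∑ e ∈ X i, ci i e := by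
    rw [← Finset.sum_union (Finset.disjoint_union_left.2 ⟨h02, h12⟩), hpart]
  rw [hsplit]
  have h1 : ∑ i ∈ N0 ∪ N1, ∑ e ∈ X i, ci i e ≤ ∑ e ∈ Mplus, c e := by
    calc ∑ i ∈ N0 ∪ N1, ∑ e ∈ X i, ci i e = ∑ i ∈ N0 ∪ N1, g i :=
          Finset.sum_congr rfl fun i hi => ha i hi
      _ ≤ _ := hkey _
  have h2 : ∑ i ∈ N2, ∑ e ∈ X i, ci i e ≤ ∑ e ∈ Mplus, c e := by
    obtain ⟨S, hSN0, hScard⟩ := Finset.exists_subset_card_eq hcard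
    obtain ⟨f, hfmap, hfinj⟩ :
        ∃ f : Fin n → Fin n, (∀ i ∈ N2, f i ∈ S) ∧ Set.InjOn f N2 := by
      have e := Finset.equivOfCardEq hScard.symm
      refine ⟨fun i => if h : i ∈ N2 then (e ⟨i, h⟩ : Fin n) else i, ?_, ?_⟩
      · intro i hi; simp only [dif_pos hi]; exact (e ⟨i, hi⟩).2
      · intro a ha' b hb' hab
        simp only [Finset.mem_coe] at ha' hb'
        simp only [dif_pos ha', dif_pos hb'] at hab
        have : e ⟨a, ha'⟩ = e ⟨b, hb'⟩ := Subtype.ext hab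
        exact Subtype.ext_iff.1 (e.injective this)
    calc ∑ i ∈ N2, ∑ e ∈ X i, ci i e ≤ ∑ i ∈ N2, g (f i) := by
          apply Finset.sum_le_sum
          intro i hi
          have hfi0 : f i ∈ N0 := hSN0 (hfmap i hi)
          have : ∑ e ∈ X (f i), ci i e = g (f i) := by
            have hsub : X (f i) ⊆ Mplus := hb _ hfi0
            rw [hg]
            simp only [Finset.inter_eq_left.2 hsub]
            exact Finset.sum_congr rfl fun e he => hplus i e (hsub he)
          rw [← this]
          exact hc2 i hi _ hfi0
      _ = ∑ j ∈ N2.image f, g j := (Finset.sum_image fun a ha' b hb' => hfinj ha' hb').symm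
      _ ≤ ∑ e ∈ Mplus, c e := hkey _
  linarith
end

section
/- In the greedy load-balancing (LPT-style) procedure where items of identical cost to all agents are considered in non-increasing order of cost and each item is added to the bundle with current minimum total cost, the following invariant holds throughout: for every bundle B and every other bundle B', ĉ(B) ≤ c(B'), where ĉ(B) = max_{e∈B} c(B \ {e}). In particular the final partition is EFX-feasible for every agent. -/
open Finset

/-- ĉ(S): cost of S after removing its cheapest item (0 for the empty bundle). -/
noncomputable def chat {α : Type*} [DecidableEq α] (c : α → ℝ) (S : Finset α) : ℝ :=
  (∑ x ∈ S, c x) - (if h : S.Nonempty then S.inf' h c else 0)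

lemma chat_le_sum {α : Type*} [DecidableEq α] (c : α → ℝ) (hc : ∀ x, 0 ≤ c x)
    (S : Finset α) : chat c S ≤ ∑ x ∈ S, c x := by
  unfold chat
  split
  · rename_i h
    obtain ⟨x, hx, hxe⟩ := Finset.exists_mem_eq_inf' h c
    rw [hxe]
    linarith [hc x]
  · simp

lemma chat_insert {α : Type*} [DecidableEq α] (c : α → ℝ) {t : α} {S : Finset α}
    (ht : t ∉ S) (hmin : ∀ x ∈ S, c t ≤ c x) :
    chat c (insert t S) = ∑ x ∈ S, c x := by
  unfold chat
  rw [dif_pos (insert_nonempty t S), Finset.sum_insert ht]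
  rcases S.eq_empty_or_nonempty with h | h
  · subst h; simp
  · rw [Finset.inf'_insert h]
    have : c t ≤ S.inf' h c := Finset.le_inf' h c hmin
    rw [min_eq_left this]
    ring

theorem stmt10 (n m : ℕ) (c : Fin m → ℝ) (hc : ∀ j, 0 ≤ c j)
    -- items are considered in non-increasing order of cost
    (hsorted : ∀ j k : Fin m, j ≤ k → c k ≤ c j)
    -- B t is the family of bundles after the first t items have been placed
    (B : Fin (m + 1) → Fin n → Finset (Fin m))
    (h0 : ∀ i, B 0 i = ∅)
    -- at step t, item t is added to a bundle of current minimum total cost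
    (hstep : ∀ t : Fin m, ∃ l : Fin n,
      (∀ j, ∑ x ∈ B t.castSucc l, c x ≤ ∑ x ∈ B t.castSucc j, c x) ∧
      B t.succ l = insert t (B t.castSucc l) ∧
      ∀ j, j ≠ l → B t.succ j = B t.castSucc j) :
    -- the invariant holds throughout, and the final partition is EFX-feasible
    (∀ t : Fin (m + 1), ∀ j k : Fin n, j ≠ k →
        chat c (B t j) ≤ ∑ x ∈ B t k, c x) ∧
    (∀ j k : Fin n, chat c (B (Fin.last m) j) ≤ ∑ x ∈ B (Fin.last m) k, c x) := by
  -- elements of B t j are items with index < t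
  have hbound : ∀ t : Fin (m + 1), ∀ j : Fin n, ∀ x ∈ B t j, (x : ℕ) < (t : ℕ) := by
    intro t
    induction t using Fin.induction with
    | zero => intro j x hx; rw [h0] at hx; exact absurd hx (Finset.notMem_empty x)
    | succ t ih =>
      obtain ⟨l, _, hins, hoth⟩ := hstep t
      intro j x hx
      rw [Fin.val_succ]
      by_cases hj : j = l
      · subst hj
        rw [hins] at hx
        rcases Finset.mem_insert.mp hx with h | h
        · subst h; omega
        · have := ih j x h
          simp only [Fin.coe_castSucc] at this
          omega
      · rw [hoth j hj] at hx
        have := ih j x hx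
        simp only [Fin.coe_castSucc] at this
        omega
  have main : ∀ t : Fin (m + 1), ∀ j k : Fin n, j ≠ k →
      chat c (B t j) ≤ ∑ x ∈ B t k, c x := by
    intro t
    induction t using Fin.induction with
    | zero =>
      intro j k _
      rw [h0, h0]
      simp [chat]
    | succ t ih =>
      obtain ⟨l, hmin, hins, hoth⟩ := hstep t
      have hnotmem : t ∉ B t.castSucc l := fun h => by
        have := hbound t.castSucc l t h; simp at this
      have hle : ∀ x ∈ B t.castSucc l, c t ≤ c x := by
        intro x hx
        have := hbound t.castSucc l x hx
        simp only [Fin.coe_castSucc] at this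
        exact hsorted x t (by omega)
      intro j k hjk
      by_cases hj : j = l
      · subst hj
        rw [hins, chat_insert c hnotmem hle, hoth k hjk.symm]
        exact hmin k
      · rw [hoth j hj]
        by_cases hk : k = l
        · subst hk
          rw [hins, Finset.sum_insert hnotmem]
          have := ih j k hj
          linarith [hc t]
        · rw [hoth k hk]
          exact ih j k hjk
  refine ⟨main, fun j k => ?_⟩
  by_cases hjk : j = k
  · subst hjk; exact chat_le_sum c hc _
  · exact main _ j k hjk
end

section
/- In the reallocation process of Algorithm 3 (EF1 balancing), where in each round the maximum-cost item of the bundle B_b maximizing c̄(B) (cost after removing the largest item) is moved to the bundle B_l of minimum total cost, the quantity max_B c̄(B) is non-increasing and min_B c(B) is non-decreasing across rounds. -/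
open Finset

/-- c̄(S): cost of S after removing its most expensive item (0 for the empty bundle). -/
noncomputable def cbar {α : Type*} [DecidableEq α] (c : α → ℝ) (S : Finset α) : ℝ :=
  (∑ x ∈ S, c x) - (if h : S.Nonempty then S.sup' h c else 0)

theorem stmt16 {ι : Type*} [DecidableEq ι] (n : ℕ) (c : ι → ℝ) (hc : ∀ x, 0 ≤ c x)
    (B : Fin n → Finset ι) (hdisj : ∀ i j, i ≠ j → Disjoint (B i) (B j))
    (b l : Fin n) (hbl : b ≠ l)
    (e : ι) (he : e ∈ B b)
    -- `e` is the maximum-cost item of `B b`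
    (hemax : ∀ e' ∈ B b, c e' ≤ c e)
    -- `b` maximizes c̄ and `l` minimizes the total cost
    (hbmax : ∀ j, cbar c (B j) ≤ cbar c (B b))
    (hlmin : ∀ j, ∑ x ∈ B l, c x ≤ ∑ x ∈ B j, c x)
    -- the while-loop condition: max c̄(B) > min c(B)
    (hcond : ∑ x ∈ B l, c x < cbar c (B b))
    -- the bundles after moving `e` from `B b` to `B l`
    (B' : Fin n → Finset ι)
    (hB' : B' = fun j => if j = b then (B b).erase e
                         else if j = l then insert e (B l) else B j) :
    -- max c̄ is non-increasing and min cost is non-decreasing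
    (∀ j, ∃ k, cbar c (B' j) ≤ cbar c (B k)) ∧
    (∀ j, ∃ k, ∑ x ∈ B k, c x ≤ ∑ x ∈ B' j, c x) := by
  have heBl : e ∉ B l := (Finset.disjoint_left.mp (hdisj b l hbl)) he
  have hBbne : (B b).Nonempty := ⟨e, he⟩
  have hsup : (B b).sup' hBbne c = c e :=
    le_antisymm (Finset.sup'_le _ _ hemax) (Finset.le_sup' c he)
  have hcbarb : cbar c (B b) = (∑ x ∈ B b, c x) - c e := by
    simp [cbar, hBbne, hsup]
  have hsumnn : (0:ℝ) ≤ ∑ x ∈ B l, c x := Finset.sum_nonneg fun x _ => hc x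
  have hcb_nn : 0 ≤ cbar c (B b) := le_trans hsumnn (le_of_lt hcond)
  have hlnotb : ¬ l = b := fun h => hbl h.symm
  rw [hcbarb] at hcond
  subst hB'
  constructor
  · intro j
    by_cases hjb : j = b
    · refine ⟨b, ?_⟩
      simp only [if_pos hjb]
      by_cases hne : ((B b).erase e).Nonempty
      · have h0 : 0 ≤ ((B b).erase e).sup' hne c := by
          obtain ⟨a, ha⟩ := hne
          exact le_trans (hc a) (Finset.le_sup' c ha)
        have h1 : ∑ x ∈ (B b).erase e, c x = (∑ x ∈ B b, c x) - c e :=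
          Finset.sum_erase_eq_sub he
        simp only [cbar, dif_pos hne, dif_pos hBbne, hsup]
        rw [h1]
        linarith
      · have hemp : (B b).erase e = ∅ := Finset.not_nonempty_iff_eq_empty.mp hne
        rw [hemp]
        have h2 : cbar c (∅ : Finset ι) = 0 := by simp [cbar]
        rw [h2]
        exact hcb_nn
    · by_cases hjl : j = l
      · refine ⟨b, ?_⟩
        simp only [if_neg hjb, if_pos hjl]
        have hins : (insert e (B l)).Nonempty := ⟨e, Finset.mem_insert_self e (B l)⟩
        have hge : c e ≤ (insert e (B l)).sup' hins c :=
          Finset.le_sup' c (Finset.mem_insert_self e (B l))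
        have hsum : ∑ x ∈ insert e (B l), c x = c e + ∑ x ∈ B l, c x :=
          Finset.sum_insert heBl
        simp only [cbar, dif_pos hins, dif_pos hBbne, hsup]
        rw [hsum]
        linarith
      · exact ⟨j, by simp only [if_neg hjb, if_neg hjl]; exact le_refl _⟩
  · intro j
    by_cases hjb : j = b
    · refine ⟨l, ?_⟩
      simp only [if_pos hjb]
      rw [Finset.sum_erase_eq_sub he]
      linarith
    · by_cases hjl : j = l
      · refine ⟨l, ?_⟩
        simp only [if_neg hjb, if_pos hjl]
        rw [Finset.sum_insert heBl]
        linarith [hc e]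
      · exact ⟨j, by simp only [if_neg hjb, if_neg hjl]; exact le_refl _⟩
end

section
/- For a partition B_1, ..., B_n of chores under an identical additive cost c, if max_B c̄(B) ≤ min_B c(B) where c̄(B) = c(B) − max_{e∈B} c(e), then assigning bundles arbitrarily to agents and then letting each agent i add to her bundle only items of zero cost to her yields an allocation that is EF1. -/
open Finset

theorem stmt17 {ι : Type*} [DecidableEq ι] (n : ℕ) (M Mplus : Finset ι) (hMp : Mplus ⊆ M)
    (c : ι → ℝ) (hc : ∀ e, 0 ≤ c e)
    (ci : Fin n → ι → ℝ)
    -- restricted additive costs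
    (hrestr : ∀ i, ∀ e ∈ M, ci i e = 0 ∨ ci i e = c e)
    -- on M⁺ every agent's cost equals the common cost
    (hplus : ∀ i, ∀ e ∈ Mplus, ci i e = c e)
    -- (B_1,...,B_n) is a partition of M⁺
    (B : Fin n → Finset ι) (hdisj : ∀ i j, i ≠ j → Disjoint (B i) (B j))
    (hcover : Finset.univ.biUnion B = Mplus)
    -- max c̄(B) ≤ min c(B)
    (hbal : ∀ j k, cbar c (B j) ≤ ∑ x ∈ B k, c x)
    -- bundles are assigned arbitrarily
    (σ : Equiv.Perm (Fin n))
    -- each agent i then adds a set S i of items of zero cost to her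
    (S : Fin n → Finset ι) (hSM : ∀ i, S i ⊆ M)
    (hSzero : ∀ i, ∑ e ∈ S i, ci i e = 0)
    (X : Fin n → Finset ι) (hX : X = fun i => B (σ i) ∪ S i) :
    -- the resulting allocation is EF1
    ∀ i j : Fin n, X i = ∅ ∨
      ∃ e ∈ X i, ∑ x ∈ (X i).erase e, ci i x ≤ ∑ x ∈ X j, ci i x := by
  subst hX
  intro i j
  simp only []
  have hnonneg : ∀ k e, e ∈ M → 0 ≤ ci k e := fun k e he => by
    rcases hrestr k e he with h | h <;> simp [h, hc e]
  have hBsub : ∀ k, B k ⊆ Mplus := fun k e he => by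
    rw [← hcover]; exact Finset.mem_biUnion.2 ⟨k, Finset.mem_univ k, he⟩
  have hSz : ∀ e ∈ S i, ci i e = 0 := fun e he =>
    (Finset.sum_eq_zero_iff_of_nonneg (fun x hx => hnonneg i x (hSM i hx))).1 (hSzero i) e he
  have hXM : ∀ k, B (σ k) ∪ S k ⊆ M := fun k =>
    Finset.union_subset ((hBsub _).trans hMp) (hSM k)
  have hXi : ∑ x ∈ B (σ i) ∪ S i, ci i x = ∑ x ∈ B (σ i), c x := by
    rw [← Finset.union_sdiff_self_eq_union, Finset.sum_union Finset.disjoint_sdiff]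
    have h1 : ∑ x ∈ B (σ i), ci i x = ∑ x ∈ B (σ i), c x :=
      Finset.sum_congr rfl (fun e he => hplus i e (hBsub _ he))
    have h2 : ∑ x ∈ S i \ B (σ i), ci i x = 0 :=
      Finset.sum_eq_zero fun e he => hSz e (Finset.mem_sdiff.1 he).1
    rw [h1, h2, add_zero]
  have hRHS : ∑ x ∈ B (σ j), c x ≤ ∑ x ∈ B (σ j) ∪ S j, ci i x := by
    calc ∑ x ∈ B (σ j), c x = ∑ x ∈ B (σ j), ci i x :=
          Finset.sum_congr rfl (fun e he => (hplus i e (hBsub _ he)).symm)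
      _ ≤ _ := Finset.sum_le_sum_of_subset_of_nonneg Finset.subset_union_left
          (fun e he _ => hnonneg i e (hXM j he))
  have hRHS0 : 0 ≤ ∑ x ∈ B (σ j) ∪ S j, ci i x :=
    Finset.sum_nonneg fun e he => hnonneg i e (hXM j he)
  rcases (B (σ i)).eq_empty_or_nonempty with hB | hB
  · rcases (B (σ i) ∪ S i).eq_empty_or_nonempty with hU | ⟨e, he⟩
    · exact Or.inl hU
    · refine Or.inr ⟨e, he, ?_⟩
      have := Finset.sum_erase_eq_sub (f := ci i) he
      rw [this, hXi, hB]
      simp only [Finset.sum_empty, zero_sub]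
      have := hnonneg i e (hXM i he)
      linarith
  · obtain ⟨e, heB, hesup⟩ := Finset.exists_mem_eq_sup' hB c
    refine Or.inr ⟨e, Finset.mem_union_left _ heB, ?_⟩
    rw [Finset.sum_erase_eq_sub (Finset.mem_union_left _ heB), hXi,
      hplus i e (hBsub _ heB)]
    have hb := hbal (σ i) (σ j)
    rw [cbar, dif_pos hB] at hb
    rw [hesup] at hb
    linarith
end
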